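/- Let F be a constant 2-form on ℝ^{n,1} whose real kernel K = {v ∈ ℝ^{n+1} : η⁻¹F v = 0} is nonzero and spacelike, i.e. η restricted to K is positive definite. Then there exist Λ ∈ O(n,1), a real number a > 0, an integer r ≥ 0 with 2r + 1 ≤ n, and real numbers b₁ ≥ … ≥ b_r > 0 such that Λᵀ F Λ = a·dx⁰dx¹ + Σ_{i=1}^r b_i · dx^{2i}dx^{2i+1} (the sum being empty when r = 0). -/

import Mathlib

open Matrix BigOperators

noncomputable section

/-- The Minkowski metric `η = diag(−1,1,…,1)` on `ℝ^{n,1}`. -/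
def eta (n : ℕ) : Matrix (Fin (n+1)) (Fin (n+1)) ℝ :=
  Matrix.diagonal (fun i => if (i : ℕ) = 0 then -1 else 1)

/-- `dx^μ dx^ν`: the antisymmetric matrix with `(μ,ν)` entry `+1`,
`(ν,μ)` entry `−1`, all other entries `0`. -/
def dx (n μ ν : ℕ) : Matrix (Fin (n+1)) (Fin (n+1)) ℝ :=
  Matrix.of fun i j =>
    if (i : ℕ) = μ ∧ (j : ℕ) = ν then 1
    else if (i : ℕ) = ν ∧ (j : ℕ) = μ then -1 else 0

/-- The operator `♯F = η⁻¹ F` as a complex matrix acting on `ℂ^{n+1}`. -/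
def sharp {n : ℕ} (F : Matrix (Fin (n+1)) (Fin (n+1)) ℝ) :
    Matrix (Fin (n+1)) (Fin (n+1)) ℂ :=
  ((eta n)⁻¹ * F).map (Complex.ofReal)

/-- The bilinear form `η` extended complex-bilinearly to `ℂ^{n+1}`. -/
def etaC {n : ℕ} (v w : Fin (n+1) → ℂ) : ℂ :=
  ∑ i : Fin (n+1), (if (i : ℕ) = 0 then (-1 : ℂ) else 1) * v i * w i

/-- The bilinear form `η` on `ℝ^{n+1}`. -/
def etaR {n : ℕ} (v w : Fin (n+1) → ℝ) : ℝ :=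
  ∑ i : Fin (n+1), (if (i : ℕ) = 0 then (-1 : ℝ) else 1) * v i * w i

/-- `v` is an eigenvector of `M` with eigenvalue `lam`. -/
def IsEigenpair {n : ℕ} (M : Matrix (Fin (n+1)) (Fin (n+1)) ℂ) (lam : ℂ)
    (v : Fin (n+1) → ℂ) : Prop :=
  v ≠ 0 ∧ M.mulVec v = lam • v

/-- `lam` is an eigenvalue of the matrix `M`. -/
def HasEigenvalue' {n : ℕ} (M : Matrix (Fin (n+1)) (Fin (n+1)) ℂ) (lam : ℂ) : Prop :=
  ∃ v, IsEigenpair M lam v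

/-- `b₁ ≥ b₂ ≥ … ≥ b_r > 0`. -/
def DecreasingPos {r : ℕ} (b : Fin r → ℝ) : Prop :=
  (∀ i j : Fin r, i ≤ j → b j ≤ b i) ∧ ∀ i, 0 < b i


namespace CFSK

variable {n : ℕ}

lemma eta_mul_eta : eta n * eta n = 1 := by
  rw [eta, Matrix.diagonal_mul_diagonal]
  ext i j
  by_cases hij : i = j
  · subst hij
    by_cases h : (i : ℕ) = 0 <;> simp [Matrix.diagonal_apply_eq, Matrix.one_apply_eq, h] <;> split_ifs <;> norm_num
  · simp [Matrix.diagonal_apply_ne _ hij, Matrix.one_apply_ne hij]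

lemma eta_inv : (eta n)⁻¹ = eta n :=
  Matrix.inv_eq_right_inv eta_mul_eta

lemma etaR_eq_dot (v w : Fin (n+1) → ℝ) : etaR v w = v ⬝ᵥ (eta n).mulVec w := by
  unfold etaR dotProduct
  rw [eta]
  refine Finset.sum_congr rfl fun i _ => ?_
  rw [Matrix.mulVec_diagonal]
  ring

lemma etaR_comm (v w : Fin (n+1) → ℝ) : etaR v w = etaR w v := by
  unfold etaR; exact Finset.sum_congr rfl fun i _ => by ring

lemma etaR_add_left (x y w : Fin (n+1) → ℝ) : etaR (x + y) w = etaR x w + etaR y w := by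
  unfold etaR; rw [← Finset.sum_add_distrib]
  refine Finset.sum_congr rfl fun i _ => ?_
  by_cases h : (i : ℕ) = 0 <;> simp [h, Pi.add_apply] <;> ring

lemma etaR_add_right (x y w : Fin (n+1) → ℝ) : etaR w (x + y) = etaR w x + etaR w y := by
  rw [etaR_comm, etaR_add_left, etaR_comm x w, etaR_comm y w]

lemma etaR_smul_left (c : ℝ) (x w : Fin (n+1) → ℝ) : etaR (c • x) w = c * etaR x w := by
  unfold etaR; rw [Finset.mul_sum]
  refine Finset.sum_congr rfl fun i _ => ?_
  by_cases h : (i : ℕ) = 0 <;> simp [h, Pi.smul_apply, smul_eq_mul] <;> ring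

lemma etaR_smul_right (c : ℝ) (x w : Fin (n+1) → ℝ) : etaR w (c • x) = c * etaR w x := by
  rw [etaR_comm, etaR_smul_left, etaR_comm]

lemma etaR_sub_left (x y w : Fin (n+1) → ℝ) : etaR (x - y) w = etaR x w - etaR y w := by
  have : x - y = x + (-1 : ℝ) • y := by ring_nf; funext i; simp; ring
  rw [this, etaR_add_left, etaR_smul_left]; ring

lemma etaR_sub_right (x y w : Fin (n+1) → ℝ) : etaR w (x - y) = etaR w x - etaR w y := by
  rw [etaR_comm, etaR_sub_left, etaR_comm x w, etaR_comm y w]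

lemma etaR_zero_left (w : Fin (n+1) → ℝ) : etaR 0 w = 0 := by
  unfold etaR; simp

lemma etaR_zero_right (w : Fin (n+1) → ℝ) : etaR w 0 = 0 := by
  rw [etaR_comm]; exact etaR_zero_left w

/-- sum of squares of spatial part -/
lemma etaR_self_eq (v : Fin (n+1) → ℝ) :
    etaR v v = -(v 0 * v 0) + ∑ i ∈ Finset.univ.erase (0 : Fin (n+1)), v i * v i := by
  unfold etaR
  rw [← Finset.add_sum_erase _ _ (Finset.mem_univ (0 : Fin (n+1)))]
  congr 1
  · simp
  · refine Finset.sum_congr rfl fun i hi => ?_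
    have : (i : ℕ) ≠ 0 := by
      intro h; exact (Finset.mem_erase.mp hi).1 (Fin.ext h)
    simp [this]

lemma etaR_self_nonneg_of_time_zero (v : Fin (n+1) → ℝ) (h : v 0 = 0) :
    0 ≤ etaR v v := by
  rw [etaR_self_eq, h]
  simp only [mul_zero, neg_zero, zero_add]
  exact Finset.sum_nonneg fun i _ => mul_self_nonneg _

lemma eq_zero_of_time_zero (v : Fin (n+1) → ℝ) (h : v 0 = 0) (h2 : etaR v v ≤ 0) :
    v = 0 := by
  have h3 : etaR v v = 0 := le_antisymm h2 (etaR_self_nonneg_of_time_zero v h)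
  rw [etaR_self_eq, h] at h3
  simp only [mul_zero, neg_zero, zero_add] at h3
  have := (Finset.sum_eq_zero_iff_of_nonneg (fun i _ => mul_self_nonneg (v i))).mp h3
  funext i
  by_cases hi : i = 0
  · rw [hi, h]; rfl
  · have := this i (Finset.mem_erase.mpr ⟨hi, Finset.mem_univ i⟩)
    have := mul_self_eq_zero.mp this
    simpa using this

/-- Key geometric lemma: two η-orthogonal non-positive vectors are dependent. -/
lemma dependent_of_nonpos (p q : Fin (n+1) → ℝ) (hp : etaR p p ≤ 0) (hq : etaR q q ≤ 0)
    (hpq : etaR p q = 0) (hp0 : p ≠ 0) : ∃ γ : ℝ, q = γ • p := by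
  have hp00 : p 0 ≠ 0 := by
    intro h
    exact hp0 (eq_zero_of_time_zero p h hp)
  set γ := q 0 / p 0 with hγ
  refine ⟨γ, ?_⟩
  set q' := q - γ • p with hq'
  have hq'0 : q' 0 = 0 := by
    simp only [hq', Pi.sub_apply, Pi.smul_apply, smul_eq_mul, hγ]
    field_simp
    ring
  have hval : etaR q' q' = etaR q q + γ^2 * etaR p p := by
    rw [hq', etaR_sub_left, etaR_sub_right, etaR_sub_right, etaR_smul_left,
      etaR_smul_right, etaR_smul_left, etaR_smul_right, hpq, etaR_comm q p, hpq]
    ring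
  have hle : etaR q' q' ≤ 0 := by
    rw [hval]
    have : γ^2 * etaR p p ≤ 0 := mul_nonpos_of_nonneg_of_nonpos (sq_nonneg γ) hp
    linarith
  have h0 := eq_zero_of_time_zero q' hq'0 hle
  have : q - γ • p = 0 := h0
  funext i
  have := congrFun this i
  simp only [Pi.sub_apply, Pi.zero_apply] at this
  simpa [sub_eq_zero] using this


section Skew
variable {n : ℕ} (F : Matrix (Fin (n+1)) (Fin (n+1)) ℝ)

/-- F as a bilinear pairing -/
def Fbil (x y : Fin (n+1) → ℝ) : ℝ := x ⬝ᵥ F.mulVec y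

lemma fbil_eq (x y : Fin (n+1) → ℝ) :
    etaR x (((eta n)⁻¹ * F).mulVec y) = Fbil F x y := by
  rw [etaR_eq_dot, eta_inv, Fbil, ← Matrix.mulVec_mulVec, Matrix.mulVec_mulVec,
    eta_mul_eta, Matrix.one_mulVec]

lemma fbil_skew (hF : Fᵀ = -F) (x y : Fin (n+1) → ℝ) : Fbil F x y = - Fbil F y x := by
  unfold Fbil
  have h2 : Matrix.vecMul y F = Fᵀ.mulVec y := (Matrix.mulVec_transpose F y).symm
  rw [Matrix.dotProduct_mulVec y, h2, hF, Matrix.neg_mulVec, neg_dotProduct,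
    dotProduct_comm, neg_neg]

lemma skew_eta (hF : Fᵀ = -F) (x y : Fin (n+1) → ℝ) :
    etaR (((eta n)⁻¹ * F).mulVec x) y = - etaR x (((eta n)⁻¹ * F).mulVec y) := by
  rw [etaR_comm, fbil_eq, fbil_eq, fbil_skew F hF]

lemma etaR_mulVec_self (hF : Fᵀ = -F) (x : Fin (n+1) → ℝ) :
    etaR x (((eta n)⁻¹ * F).mulVec x) = 0 := by
  have h1 := skew_eta F hF x x
  have h2 := etaR_comm (((eta n)⁻¹ * F).mulVec x) x
  linarith

end Skew

section Perp
variable {n : ℕ}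

/-- η-orthogonal complement of a set -/
def perp (S : Set (Fin (n+1) → ℝ)) : Submodule ℝ (Fin (n+1) → ℝ) where
  carrier := {x | ∀ y ∈ S, etaR y x = 0}
  add_mem' := by
    intro a b ha hb y hy
    rw [etaR_add_right, ha y hy, hb y hy, add_zero]
  zero_mem' := by intro y hy; rw [etaR_zero_right]
  smul_mem' := by
    intro c x hx y hy
    rw [etaR_smul_right, hx y hy, mul_zero]

lemma mem_perp {S : Set (Fin (n+1) → ℝ)} {x : Fin (n+1) → ℝ} :
    x ∈ perp S ↔ ∀ y ∈ S, etaR y x = 0 := Iff.rfl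

lemma mem_perp_singleton {y x : Fin (n+1) → ℝ} :
    x ∈ perp {y} ↔ etaR y x = 0 := by
  rw [mem_perp]
  exact ⟨fun h => h y rfl, fun h z hz => by rwa [Set.mem_singleton_iff.mp hz]⟩

open Module in
/-- splitting off one η-nondegenerate direction -/
lemma split1 (U : Submodule ℝ (Fin (n+1) → ℝ)) (x : Fin (n+1) → ℝ) (hx : x ∈ U)
    (he0 : etaR x x ≠ 0) :
    finrank ℝ (U ⊓ perp {x} : Submodule ℝ (Fin (n+1) → ℝ)) + 1 = finrank ℝ U := by
  have hx0 : x ≠ 0 := by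
    intro h; apply he0; rw [h, etaR_zero_left]
  have hsup : (Submodule.span ℝ {x}) ⊔ (U ⊓ perp {x}) = U := by
    apply le_antisymm
    · apply sup_le
      · rw [Submodule.span_le, Set.singleton_subset_iff]; exact hx
      · exact inf_le_left
    · intro w hw
      rw [Submodule.mem_sup]
      refine ⟨(etaR x w / etaR x x) • x,
        Submodule.smul_mem _ _ (Submodule.mem_span_singleton_self x),
        w - (etaR x w / etaR x x) • x, ?_, by abel⟩
      refine Submodule.mem_inf.mpr ⟨Submodule.sub_mem U hw (Submodule.smul_mem _ _ hx), ?_⟩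
      rw [mem_perp_singleton, etaR_sub_right, etaR_smul_right]
      field_simp
      ring
  have hinf : (Submodule.span ℝ {x}) ⊓ (U ⊓ perp {x}) = ⊥ := by
    rw [eq_bot_iff]
    intro z hz
    obtain ⟨hz1, hz2⟩ := Submodule.mem_inf.mp hz
    obtain ⟨hz2a, hz2b⟩ := Submodule.mem_inf.mp hz2
    obtain ⟨c, rfl⟩ := Submodule.mem_span_singleton.mp hz1
    rw [mem_perp_singleton, etaR_smul_right] at hz2b
    have hc : c = 0 := by
      rcases mul_eq_zero.mp hz2b with h | h
      · exact h
      · exact absurd h he0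
    simp [hc]
  have := Submodule.finrank_sup_add_finrank_inf_eq (Submodule.span ℝ {x}) (U ⊓ perp {x})
  rw [hsup, hinf, finrank_span_singleton hx0] at this
  simp only [finrank_bot, add_zero] at this
  omega

end Perp


section Cx
variable {n : ℕ}

def cx (v : Fin (n+1) → ℝ) : Fin (n+1) → ℂ := fun i => (v i : ℂ)
def reP (v : Fin (n+1) → ℂ) : Fin (n+1) → ℝ := fun i => (v i).re
def imP (v : Fin (n+1) → ℂ) : Fin (n+1) → ℝ := fun i => (v i).im

def cxS (U : Submodule ℝ (Fin (n+1) → ℝ)) : Submodule ℂ (Fin (n+1) → ℂ) :=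
  Submodule.span ℂ (cx '' (U : Set (Fin (n+1) → ℝ)))

lemma reP_imP_mem {U : Submodule ℝ (Fin (n+1) → ℝ)} {v : Fin (n+1) → ℂ}
    (hv : v ∈ cxS U) : reP v ∈ U ∧ imP v ∈ U := by
  induction hv using Submodule.span_induction with
  | mem x h =>
    obtain ⟨u, hu, rfl⟩ := h
    constructor
    · have : reP (cx u) = u := by funext i; simp [reP, cx]
      rwa [this]
    · have : imP (cx u) = 0 := by funext i; simp [imP, cx]
      rw [this]; exact Submodule.zero_mem U
  | zero =>
    constructor
    · have : reP (0 : Fin (n+1) → ℂ) = 0 := by funext i; simp [reP]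
      rw [this]; exact Submodule.zero_mem U
    · have : imP (0 : Fin (n+1) → ℂ) = 0 := by funext i; simp [imP]
      rw [this]; exact Submodule.zero_mem U
  | add x y hx hy ihx ihy =>
    constructor
    · have : reP (x + y) = reP x + reP y := by funext i; simp [reP]
      rw [this]; exact Submodule.add_mem U ihx.1 ihy.1
    · have : imP (x + y) = imP x + imP y := by funext i; simp [imP]
      rw [this]; exact Submodule.add_mem U ihx.2 ihy.2
  | smul c x hx ih =>
    constructor
    · have : reP (c • x) = c.re • reP x - c.im • imP x := by
        funext i
        simp [reP, imP, Complex.mul_re, Pi.smul_apply, smul_eq_mul]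
      rw [this]
      exact Submodule.sub_mem U (Submodule.smul_mem U _ ih.1) (Submodule.smul_mem U _ ih.2)
    · have : imP (c • x) = c.re • imP x + c.im • reP x := by
        funext i
        simp [reP, imP, Complex.mul_im, Pi.smul_apply, smul_eq_mul]
      rw [this]
      exact Submodule.add_mem U (Submodule.smul_mem U _ ih.2) (Submodule.smul_mem U _ ih.1)

variable (X : Matrix (Fin (n+1)) (Fin (n+1)) ℝ)

lemma mulVec_map_cx (u : Fin (n+1) → ℝ) :
    (X.map (Complex.ofReal)).mulVec (cx u) = cx (X.mulVec u) := by
  funext i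
  simp only [Matrix.mulVec, dotProduct, Matrix.map_apply, cx]
  push_cast
  rfl

lemma mulVec_map_re (v : Fin (n+1) → ℂ) (i : Fin (n+1)) :
    ((X.map (Complex.ofReal)).mulVec v i).re = X.mulVec (reP v) i := by
  simp only [Matrix.mulVec, dotProduct, Matrix.map_apply, Complex.re_sum, reP,
    Complex.re_ofReal_mul]

lemma mulVec_map_im (v : Fin (n+1) → ℂ) (i : Fin (n+1)) :
    ((X.map (Complex.ofReal)).mulVec v i).im = X.mulVec (imP v) i := by
  simp only [Matrix.mulVec, dotProduct, Matrix.map_apply, Complex.im_sum, imP,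
    Complex.im_ofReal_mul]

lemma cxS_invariant {U : Submodule ℝ (Fin (n+1) → ℝ)} (hinv : ∀ x ∈ U, X.mulVec x ∈ U) :
    ∀ v ∈ cxS U, (X.map (Complex.ofReal)).mulVec v ∈ cxS U := by
  intro v hv
  induction hv using Submodule.span_induction with
  | mem x h =>
    obtain ⟨u, hu, rfl⟩ := h
    rw [mulVec_map_cx]
    exact Submodule.subset_span ⟨X.mulVec u, hinv u hu, rfl⟩
  | zero => rw [Matrix.mulVec_zero]; exact Submodule.zero_mem _
  | add x y hx hy ihx ihy => rw [Matrix.mulVec_add]; exact Submodule.add_mem _ ihx ihy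
  | smul c x hx ih => rw [Matrix.mulVec_smul]; exact Submodule.smul_mem _ _ ih

/-- The key eigenvalue-extraction lemma over the reals. -/
lemma exists_real_pair (U : Submodule ℝ (Fin (n+1) → ℝ)) (hU : U ≠ ⊥)
    (hinv : ∀ x ∈ U, X.mulVec x ∈ U) :
    ∃ (a b : ℝ) (p q : Fin (n+1) → ℝ), p ∈ U ∧ q ∈ U ∧ ¬(p = 0 ∧ q = 0) ∧
      X.mulVec p = a • p - b • q ∧ X.mulVec q = b • p + a • q := by
  obtain ⟨w, hwU, hw0⟩ := Submodule.exists_mem_ne_zero_of_ne_bot hU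
  have hcxw : cx w ∈ cxS U := Submodule.subset_span ⟨w, hwU, rfl⟩
  have hcxw0 : cx w ≠ 0 := by
    intro h
    apply hw0
    funext i
    have := congrFun h i
    simpa [cx] using this
  have : Nontrivial ↥(cxS U) :=
    nontrivial_of_ne ⟨cx w, hcxw⟩ 0 (by simp [Subtype.ext_iff, hcxw0])
  set M := X.map (Complex.ofReal) with hM
  have hinvC := cxS_invariant X hinv
  set f : Module.End ℂ ↥(cxS U) := (Matrix.mulVecLin M).restrict
    (fun x hx => hinvC x hx) with hf
  obtain ⟨lam, hlam⟩ := Module.End.exists_eigenvalue f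
  obtain ⟨⟨v, hvU⟩, hv⟩ := hlam.exists_hasEigenvector
  have hv0 : v ≠ 0 := by
    intro h
    exact hv.2 (by simp [Subtype.ext_iff, h])
  have heig : M.mulVec v = lam • v := by
    have h1 := Module.End.mem_eigenspace_iff.mp hv.1
    have := congrArg Subtype.val h1
    exact this
  refine ⟨lam.re, lam.im, reP v, imP v, (reP_imP_mem hvU).1, (reP_imP_mem hvU).2, ?_, ?_, ?_⟩
  · rintro ⟨hp, hq⟩
    apply hv0
    funext i
    have h1 : (v i).re = 0 := congrFun hp i
    have h2 : (v i).im = 0 := congrFun hq i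
    exact Complex.ext h1 h2
  · funext i
    have h := congrArg Complex.re (congrFun heig i)
    rw [mulVec_map_re] at h
    rw [h]
    simp [Pi.smul_apply, Pi.sub_apply, smul_eq_mul, Complex.mul_re, reP, imP]
  · funext i
    have h := congrArg Complex.im (congrFun heig i)
    rw [mulVec_map_im] at h
    rw [h]
    simp [Pi.smul_apply, Pi.add_apply, smul_eq_mul, Complex.mul_im, reP, imP]
    ring

end Cx

section PairAlg
variable {n : ℕ} (F : Matrix (Fin (n+1)) (Fin (n+1)) ℝ)

lemma pair_relations (hF : Fᵀ = -F) (a b : ℝ) (p q : Fin (n+1) → ℝ)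
    (hp : ((eta n)⁻¹ * F).mulVec p = a • p - b • q)
    (hq : ((eta n)⁻¹ * F).mulVec q = b • p + a • q) :
    a * etaR p p = b * etaR p q ∧ a * etaR q q = -(b * etaR p q) ∧
      2*a*etaR p q + b * (etaR p p - etaR q q) = 0 := by
  have e1 := etaR_mulVec_self F hF p
  rw [hp, etaR_sub_right, etaR_smul_right, etaR_smul_right] at e1
  have e2 := etaR_mulVec_self F hF q
  rw [hq, etaR_add_right, etaR_smul_right, etaR_smul_right, etaR_comm q p] at e2
  have e3 := skew_eta F hF p q
  rw [hp, hq, etaR_sub_left, etaR_smul_left, etaR_smul_left, etaR_add_right,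
    etaR_smul_right, etaR_smul_right] at e3
  refine ⟨by linarith, by linarith, by linarith⟩

lemma pair_indep {X : Matrix (Fin (n+1)) (Fin (n+1)) ℝ} {a b : ℝ} {p q : Fin (n+1) → ℝ}
    (hb : b ≠ 0) (hnz : ¬(p = 0 ∧ q = 0))
    (hp : X.mulVec p = a • p - b • q)
    (hq : X.mulVec q = b • p + a • q) :
    p ≠ 0 ∧ q ≠ 0 ∧ ∀ γ : ℝ, q ≠ γ • p := by
  have hp0 : p ≠ 0 := by
    intro h
    rw [h, Matrix.mulVec_zero, smul_zero, zero_sub, eq_comm, neg_eq_zero, smul_eq_zero] at hp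
    rcases hp with h' | h'
    · exact hb h'
    · exact hnz ⟨h, h'⟩
  have hq0 : q ≠ 0 := by
    intro h
    rw [h, Matrix.mulVec_zero, smul_zero, add_zero, eq_comm, smul_eq_zero] at hq
    rcases hq with h' | h'
    · exact hb h'
    · exact hnz ⟨h', h⟩
  refine ⟨hp0, hq0, fun γ hγ => ?_⟩
  rw [hγ] at hp hq
  rw [Matrix.mulVec_smul, hp] at hq
  have : (-(b * (γ^2+1))) • p = 0 := by
    have := sub_eq_zero.mpr hq
    rw [← this]
    funext i
    simp [Pi.smul_apply, Pi.sub_apply, Pi.add_apply, smul_eq_mul]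
    ring
  rcases smul_eq_zero.mp this with h | h
  · apply hb
    have h2 : γ^2 + 1 > 0 := by positivity
    have := neg_eq_zero.mp h
    rcases mul_eq_zero.mp this with h3 | h3
    · exact h3
    · linarith
  · exact hp0 h

end PairAlg


section Planes
variable {n : ℕ} (F : Matrix (Fin (n+1)) (Fin (n+1)) ℝ)

open Module

lemma make_plane {X : Matrix (Fin (n+1)) (Fin (n+1)) ℝ} {p q : Fin (n+1) → ℝ} {b : ℝ}
    (hb : b ≠ 0) (hXp : X.mulVec p = (-b) • q) (hXq : X.mulVec q = b • p)
    (hs : 0 < etaR p p) (hst : etaR p p = etaR q q) (hc : etaR p q = 0) :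
    ∃ (P Q : Fin (n+1) → ℝ) (B : ℝ), 0 < B ∧
      P ∈ Submodule.span ℝ ({p, q} : Set (Fin (n+1) → ℝ)) ∧
      Q ∈ Submodule.span ℝ ({p, q} : Set (Fin (n+1) → ℝ)) ∧
      X.mulVec P = (-B) • Q ∧ X.mulVec Q = B • P ∧
      etaR P P = 1 ∧ etaR Q Q = 1 ∧ etaR P Q = 0 := by
  set s := etaR p p with hsdef
  set w := Real.sqrt s with hw
  have hwpos : 0 < w := Real.sqrt_pos.mpr hs
  have hw2 : w * w = s := Real.mul_self_sqrt hs.le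
  set p₁ := w⁻¹ • p with hp₁
  set q₁ := w⁻¹ • q with hq₁
  have hmemp : p₁ ∈ Submodule.span ℝ ({p, q} : Set (Fin (n+1) → ℝ)) :=
    Submodule.smul_mem _ _ (Submodule.subset_span (by left; rfl))
  have hmemq : q₁ ∈ Submodule.span ℝ ({p, q} : Set (Fin (n+1) → ℝ)) :=
    Submodule.smul_mem _ _ (Submodule.subset_span (by right; rfl))
  have hXp₁ : X.mulVec p₁ = (-b) • q₁ := by
    rw [hp₁, Matrix.mulVec_smul, hXp, hq₁, smul_comm]
  have hXq₁ : X.mulVec q₁ = b • p₁ := by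
    rw [hq₁, Matrix.mulVec_smul, hXq, hp₁, smul_comm]
  have key : w⁻¹ * (w⁻¹ * s) = 1 := by
    rw [← hw2]; field_simp
  have hpp₁ : etaR p₁ p₁ = 1 := by
    rw [hp₁, etaR_smul_left, etaR_smul_right]; exact key
  have hqq₁ : etaR q₁ q₁ = 1 := by
    rw [hq₁, etaR_smul_left, etaR_smul_right, ← hst]; exact key
  have hpq₁ : etaR p₁ q₁ = 0 := by
    rw [hp₁, hq₁, etaR_smul_left, etaR_smul_right, hc]
    ring
  rcases lt_or_gt_of_ne hb with hneg | hpos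
  · refine ⟨q₁, p₁, -b, by linarith, hmemq, hmemp, ?_, ?_, hqq₁, hpp₁, ?_⟩
    · rw [hXq₁, neg_neg]
    · rw [hXp₁]
    · rw [etaR_comm]; exact hpq₁
  · exact ⟨p₁, q₁, b, hpos, hmemp, hmemq, hXp₁, hXq₁, hpp₁, hqq₁, hpq₁⟩

end Planes


section Rot
variable {n : ℕ}

open Module

lemma rot_decomp (F : Matrix (Fin (n+1)) (Fin (n+1)) ℝ) (hF : Fᵀ = -F) (d : ℕ) :
    ∀ (U : Submodule ℝ (Fin (n+1) → ℝ)), finrank ℝ U = d →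
    (∀ x ∈ U, ((eta n)⁻¹ * F).mulVec x ∈ U) →
    (∀ x ∈ U, ((eta n)⁻¹ * F).mulVec x = 0 → x = 0) →
    (∀ x ∈ U, x ≠ 0 → 0 < etaR x x) →
    ∃ (r : ℕ), d = 2*r ∧ ∃ (p q : Fin r → (Fin (n+1) → ℝ)) (b : Fin r → ℝ),
      (∀ i, p i ∈ U) ∧ (∀ i, q i ∈ U) ∧ (∀ i, 0 < b i) ∧
      (∀ i, ((eta n)⁻¹ * F).mulVec (p i) = (-(b i)) • q i) ∧
      (∀ i, ((eta n)⁻¹ * F).mulVec (q i) = b i • p i) ∧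
      (∀ i j, etaR (p i) (p j) = if i = j then 1 else 0) ∧
      (∀ i j, etaR (q i) (q j) = if i = j then 1 else 0) ∧
      (∀ i j, etaR (p i) (q j) = 0) := by
  induction d using Nat.strong_induction_on with
  | _ d ih =>
    intro U hd hinv hinj hpos
    rcases Nat.eq_zero_or_pos d with h0 | hdpos
    · subst h0
      exact ⟨0, rfl, Fin.elim0, Fin.elim0, Fin.elim0,
        fun i => i.elim0, fun i => i.elim0, fun i => i.elim0, fun i => i.elim0,
        fun i => i.elim0, fun i => i.elim0, fun i => i.elim0, fun i => i.elim0⟩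
    · have hUne : U ≠ ⊥ := by
        intro h
        rw [h, finrank_bot] at hd
        omega
      obtain ⟨a, b, p, q, hpU, hqU, hnz, hXp, hXq⟩ :=
        exists_real_pair ((eta n)⁻¹ * F) U hUne hinv
      obtain ⟨e1, e2, e3⟩ := pair_relations F hF a b p q hXp hXq
      have hb : b ≠ 0 := by
        intro hb0
        subst hb0
        by_cases hp0 : p = 0
        · have hq0 : q ≠ 0 := fun h => hnz ⟨hp0, h⟩
          have ht := hpos q hqU hq0
          rcases eq_or_ne a 0 with ha | ha
          · subst ha
            apply hq0
            apply hinj q hqU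
            rw [hXq]
            funext i; simp
          · have : etaR q q = 0 := by
              have := mul_eq_zero.mp (by linarith : a * etaR q q = 0)
              tauto
            linarith
        · have hs := hpos p hpU hp0
          rcases eq_or_ne a 0 with ha | ha
          · subst ha
            apply hp0
            apply hinj p hpU
            rw [hXp]
            funext i; simp
          · have : etaR p p = 0 := by
              have : a * etaR p p = 0 := by rw [e1]; ring
              have := mul_eq_zero.mp this
              tauto
            linarith
      obtain ⟨hp0, hq0, hindep⟩ := pair_indep hb hnz hXp hXq
      have hs := hpos p hpU hp0
      have ht := hpos q hqU hq0
      have ha : a = 0 := by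
        by_contra ha0
        have : a * (etaR p p + etaR q q) = 0 := by
          rw [mul_add, e1, e2]; ring
        have h2 := mul_eq_zero.mp this
        rcases h2 with h | h
        · exact ha0 h
        · linarith
      subst ha
      have hc : etaR p q = 0 := by
        have : b * etaR p q = 0 := by rw [← e1]; ring
        rcases mul_eq_zero.mp this with h | h
        · exact absurd h hb
        · exact h
      have hst : etaR p p = etaR q q := by
        have : b * (etaR p p - etaR q q) = 0 := by linarith
        rcases mul_eq_zero.mp this with h | h
        · exact absurd h hb
        · linarith
      have hXp' : ((eta n)⁻¹ * F).mulVec p = (-b) • q := by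
        rw [hXp, zero_smul, zero_sub, neg_smul]
      have hXq' : ((eta n)⁻¹ * F).mulVec q = b • p := by
        rw [hXq, zero_smul, add_zero]
      obtain ⟨P, Q, B, hBpos, hPspan, hQspan, hXP, hXQ, hPP, hQQ, hPQ⟩ :=
        make_plane hb hXp' hXq' hs hst hc
      have hspanU : Submodule.span ℝ ({p, q} : Set (Fin (n+1) → ℝ)) ≤ U := by
        rw [Submodule.span_le]
        rintro z (rfl | rfl)
        · exact hpU
        · exact hqU
      have hPU : P ∈ U := hspanU hPspan
      have hQU2 : Q ∈ U := hspanU hQspan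
      set U' := U ⊓ perp {P} ⊓ perp {Q} with hU'
      have memU' : ∀ x, x ∈ U' ↔ x ∈ U ∧ etaR P x = 0 ∧ etaR Q x = 0 := by
        intro x
        constructor
        · rintro ⟨⟨h1, h2⟩, h3⟩
          exact ⟨h1, mem_perp_singleton.mp h2, mem_perp_singleton.mp h3⟩
        · rintro ⟨h1, h2, h3⟩
          exact ⟨⟨h1, mem_perp_singleton.mpr h2⟩, mem_perp_singleton.mpr h3⟩
      have hsplit1 : finrank ℝ (U ⊓ perp {P} : Submodule ℝ (Fin (n+1) → ℝ)) + 1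
          = finrank ℝ U := split1 U P hPU (by rw [hPP]; exact one_ne_zero)
      have hQmem : Q ∈ U ⊓ perp {P} :=
        ⟨hQU2, mem_perp_singleton.mpr hPQ⟩
      have hsplit2 : finrank ℝ (U ⊓ perp {P} ⊓ perp {Q} : Submodule ℝ (Fin (n+1) → ℝ)) + 1
          = finrank ℝ (U ⊓ perp {P} : Submodule ℝ (Fin (n+1) → ℝ)) :=
        split1 _ Q hQmem (by rw [hQQ]; exact one_ne_zero)
      have hd' : finrank ℝ U' = d - 2 := by
        rw [hU']; omega
      have hinv' : ∀ x ∈ U', ((eta n)⁻¹ * F).mulVec x ∈ U' := by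
        intro x hx
        rw [memU'] at hx ⊢
        obtain ⟨hxU, hxP, hxQ⟩ := hx
        refine ⟨hinv x hxU, ?_, ?_⟩
        · have := skew_eta F hF P x
          rw [hXP, etaR_smul_left, hxQ] at this
          linarith
        · have := skew_eta F hF Q x
          rw [hXQ, etaR_smul_left, hxP] at this
          linarith
      have hinj' : ∀ x ∈ U', ((eta n)⁻¹ * F).mulVec x = 0 → x = 0 := by
        intro x hx
        exact hinj x ((memU' x).mp hx).1
      have hpos' : ∀ x ∈ U', x ≠ 0 → 0 < etaR x x := by
        intro x hx
        exact hpos x ((memU' x).mp hx).1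
      obtain ⟨r', hr', p', q', b', hpU', hqU', hb', hXp'', hXq'', hGpp, hGqq, hGpq⟩ :=
        ih (d - 2) (by omega) U' hd' hinv' hinj' hpos'
      have hUsub : U' ≤ U := le_trans inf_le_left inf_le_left
      refine ⟨r' + 1, by omega, Fin.cons P p', Fin.cons Q q', Fin.cons B b',
        ?_, ?_, ?_, ?_, ?_, ?_, ?_, ?_⟩
      · intro i
        refine Fin.cases ?_ (fun j => ?_) i
        · exact hPU
        · exact hUsub (hpU' j)
      · intro i
        refine Fin.cases ?_ (fun j => ?_) i
        · exact hQU2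
        · exact hUsub (hqU' j)
      · intro i
        refine Fin.cases ?_ (fun j => ?_) i
        · exact hBpos
        · exact hb' j
      · intro i
        refine Fin.cases ?_ (fun j => ?_) i
        · simpa using hXP
        · simpa using hXp'' j
      · intro i
        refine Fin.cases ?_ (fun j => ?_) i
        · simpa using hXQ
        · simpa using hXq'' j
      · intro i j
        refine Fin.cases ?_ (fun i' => ?_) i <;> refine Fin.cases ?_ (fun j' => ?_) j
        · simpa using hPP
        · have := ((memU' _).mp (hpU' j')).2.1
          simpa [(Fin.succ_ne_zero j').symm] using this
        · have := ((memU' _).mp (hpU' i')).2.1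
          rw [etaR_comm] at this
          simpa using this
        · have := hGpp i' j'
          simp only [Fin.cons_succ]
          rw [this]
          simp [Fin.succ_inj]
      · intro i j
        refine Fin.cases ?_ (fun i' => ?_) i <;> refine Fin.cases ?_ (fun j' => ?_) j
        · simpa using hQQ
        · have := ((memU' _).mp (hqU' j')).2.2
          simpa [(Fin.succ_ne_zero j').symm] using this
        · have := ((memU' _).mp (hqU' i')).2.2
          rw [etaR_comm] at this
          simpa using this
        · have := hGqq i' j'
          simp only [Fin.cons_succ]
          rw [this]
          simp [Fin.succ_inj]
      · intro i j
        refine Fin.cases ?_ (fun i' => ?_) i <;> refine Fin.cases ?_ (fun j' => ?_) j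
        · simpa using hPQ
        · have := ((memU' _).mp (hqU' j')).2.1
          simpa using this
        · have := ((memU' _).mp (hpU' i')).2.2
          rw [etaR_comm] at this
          simpa using this
        · simpa using hGpq i' j'

end Rot


section Boost
variable {n : ℕ}

open Module

lemma boost_decomp (F : Matrix (Fin (n+1)) (Fin (n+1)) ℝ) (hF : Fᵀ = -F) (d : ℕ) :
    ∀ (U : Submodule ℝ (Fin (n+1) → ℝ)), finrank ℝ U = d →
    (∀ x ∈ U, ((eta n)⁻¹ * F).mulVec x ∈ U) →
    (∀ x ∈ U, ((eta n)⁻¹ * F).mulVec x = 0 → x = 0) →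
    (∃ w ∈ U, etaR w w < 0) →
    ∃ (a : ℝ), 0 < a ∧ ∃ u v, u ∈ U ∧ v ∈ U ∧
      ((eta n)⁻¹ * F).mulVec u = a • u ∧ ((eta n)⁻¹ * F).mulVec v = (-a) • v ∧
      etaR u u = 0 ∧ etaR v v = 0 ∧ etaR u v = -1 := by
  induction d using Nat.strong_induction_on with
  | _ d ih =>
    intro U hd hinv hinj hw
    obtain ⟨w, hwU, hww⟩ := hw
    have hw0 : w ≠ 0 := by
      intro h; rw [h, etaR_zero_left] at hww; linarith
    have hUne : U ≠ ⊥ := by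
      intro h; rw [h, Submodule.mem_bot] at hwU; exact hw0 hwU
    obtain ⟨a, b, p, q, hpU, hqU, hnz, hXp, hXq⟩ :=
      exists_real_pair ((eta n)⁻¹ * F) U hUne hinv
    obtain ⟨e1, e2, e3⟩ := pair_relations F hF a b p q hXp hXq
    by_cases hb : b = 0
    · -- real eigenvalue case
      subst hb
      have hXp' : ((eta n)⁻¹ * F).mulVec p = a • p := by
        rw [hXp, zero_smul, sub_zero]
      have hXq' : ((eta n)⁻¹ * F).mulVec q = a • q := by
        rw [hXq, zero_smul, zero_add]
      obtain ⟨u₀, hu₀U, hu₀0, hXu₀⟩ :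
          ∃ u₀, u₀ ∈ U ∧ u₀ ≠ 0 ∧ ((eta n)⁻¹ * F).mulVec u₀ = a • u₀ := by
        by_cases hp0 : p = 0
        · exact ⟨q, hqU, fun h => hnz ⟨hp0, h⟩, hXq'⟩
        · exact ⟨p, hpU, hp0, hXp'⟩
      have ha : a ≠ 0 := by
        intro h
        rw [h, zero_smul] at hXu₀
        exact hu₀0 (hinj u₀ hu₀U hXu₀)
      have hnull : etaR u₀ u₀ = 0 := by
        have := etaR_mulVec_self F hF u₀
        rw [hXu₀, etaR_smul_right] at this
        rcases mul_eq_zero.mp this with h | h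
        · exact absurd h ha
        · exact h
      have hwu : etaR w u₀ ≠ 0 := by
        intro h
        obtain ⟨γ, hγ⟩ := dependent_of_nonpos w u₀ hww.le hnull.le h hw0
        rw [hγ, etaR_smul_left, etaR_smul_right] at hnull
        have hγ0 : γ = 0 := by
          rcases mul_eq_zero.mp hnull with h' | h'
          · exact h'
          · rcases mul_eq_zero.mp h' with h'' | h''
            · exact h''
            · linarith
        rw [hγ0, zero_smul] at hγ
        exact hu₀0 hγ
      -- find the partner eigenvector via non-surjectivity
      set T : (Fin (n+1) → ℝ) →ₗ[ℝ] (Fin (n+1) → ℝ) :=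
        Matrix.mulVecLin ((eta n)⁻¹ * F) + a • LinearMap.id with hT
      have hTmaps : ∀ x ∈ U, T x ∈ U := by
        intro x hx
        rw [hT]
        simp only [LinearMap.add_apply, LinearMap.smul_apply, LinearMap.id_apply,
          Matrix.mulVecLin_apply]
        exact Submodule.add_mem U (hinv x hx) (Submodule.smul_mem U a hx)
      set g := T.restrict hTmaps with hg
      have hginj : ¬ Function.Injective g := by
        intro hginj
        have hgsurj := LinearMap.injective_iff_surjective.mp hginj
        obtain ⟨y, hy⟩ := hgsurj ⟨w, hwU⟩
        have hyv := congrArg Subtype.val hy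
        simp only [hg, LinearMap.restrict_apply] at hyv
        have hyv' : ((eta n)⁻¹ * F).mulVec (y : Fin (n+1) → ℝ) + a • (y : Fin (n+1) → ℝ)
            = w := by
          rw [← hyv, hT]
          simp [Matrix.mulVecLin_apply]
        have := congrArg (fun z => etaR z u₀) hyv'
        rw [etaR_add_left, etaR_smul_left] at this
        have hskew := skew_eta F hF (y : Fin (n+1) → ℝ) u₀
        rw [hXu₀, etaR_smul_right] at hskew
        rw [hskew] at this
        apply hwu
        linarith [this]
      have hker : LinearMap.ker g ≠ ⊥ := by
        intro h
        exact hginj (LinearMap.ker_eq_bot.mp h)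
      obtain ⟨z, hzker, hz0⟩ := Submodule.exists_mem_ne_zero_of_ne_bot hker
      set v₀ : Fin (n+1) → ℝ := (z : Fin (n+1) → ℝ) with hv₀
      have hv₀U : v₀ ∈ U := z.2
      have hv₀0 : v₀ ≠ 0 := by
        intro h
        apply hz0
        exact Subtype.ext h
      have hXv₀ : ((eta n)⁻¹ * F).mulVec v₀ = (-a) • v₀ := by
        have := congrArg Subtype.val (LinearMap.mem_ker.mp hzker)
        simp only [hg, LinearMap.restrict_apply, ZeroMemClass.coe_zero] at this
        have h2 : ((eta n)⁻¹ * F).mulVec v₀ + a • v₀ = 0 := by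
          rw [← this, hT]
          simp [Matrix.mulVecLin_apply]
          rfl
        rw [neg_smul]
        exact eq_neg_of_add_eq_zero_left h2
      have hv₀null : etaR v₀ v₀ = 0 := by
        have := etaR_mulVec_self F hF v₀
        rw [hXv₀, etaR_smul_right] at this
        rcases mul_eq_zero.mp this with h | h
        · exfalso; apply ha; linarith [neg_eq_zero.mp h]
        · exact h
      have hcuv : etaR u₀ v₀ ≠ 0 := by
        intro h
        obtain ⟨γ, hγ⟩ := dependent_of_nonpos u₀ v₀ hnull.le hv₀null.le h hu₀0
        rw [hγ, Matrix.mulVec_smul, hXu₀, smul_smul, smul_smul] at hXv₀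
        have : (γ * a - -a * γ) • u₀ = 0 := by
          rw [sub_smul, hXv₀, sub_self]
        rcases smul_eq_zero.mp this with h' | h'
        · have hγ0 : γ = 0 := by
            have : 2 * (a * γ) = 0 := by linarith
            have := mul_eq_zero.mp this
            rcases this with h'' | h''
            · linarith
            · rcases mul_eq_zero.mp h'' with h3 | h3
              · exact absurd h3 ha
              · exact h3
          rw [hγ0, zero_smul] at hγ
          exact hv₀0 hγ
        · exact hu₀0 h'
      rcases lt_or_gt_of_ne ha with haneg | hapos
      · -- a < 0 : v₀ is the positive eigenvector
        set c := (-(etaR v₀ u₀))⁻¹ with hc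
        have hc0 : etaR v₀ u₀ ≠ 0 := by
          rw [etaR_comm]; exact hcuv
        refine ⟨-a, by linarith, v₀, c • u₀, hv₀U, Submodule.smul_mem U c hu₀U, ?_, ?_, hv₀null, ?_, ?_⟩
        · rw [hXv₀]
        · rw [Matrix.mulVec_smul, hXu₀, neg_neg, smul_comm]
        · rw [etaR_smul_left, etaR_smul_right, hnull]
          ring
        · rw [etaR_smul_right, hc]
          field_simp
      · -- a > 0
        set c := (-(etaR u₀ v₀))⁻¹ with hc
        refine ⟨a, hapos, u₀, c • v₀, hu₀U, Submodule.smul_mem U c hv₀U, hXu₀, ?_, hnull, ?_, ?_⟩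
        · rw [Matrix.mulVec_smul, hXv₀, smul_comm]
        · rw [etaR_smul_left, etaR_smul_right, hv₀null]
          ring
        · rw [etaR_smul_right, hc]
          field_simp
    · -- complex eigenvalue case : must be a rotation plane, recurse
      obtain ⟨hp0, hq0, hindep⟩ := pair_indep hb hnz hXp hXq
      have ha : a = 0 := by
        by_contra ha0
        have hsum : etaR p p + etaR q q = 0 := by
          have h2 : a * (etaR p p + etaR q q) = 0 := by
            rw [mul_add, e1, e2]; ring
          rcases mul_eq_zero.mp h2 with h | h
          · exact absurd h ha0
          · exact h
        have ht' : etaR q q = - etaR p p := by linarith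
        have e3' : 2*a*etaR p q + 2*b*etaR p p = 0 := by
          rw [ht'] at e3; linarith
        have key : 2*(a^2 + b^2) * etaR p p = 0 := by
          linear_combination (2*a) * e1 + b * e3'
        have hs0 : etaR p p = 0 := by
          rcases mul_eq_zero.mp key with h | h
          · exfalso
            have : a^2 + b^2 > 0 := by positivity
            linarith
          · exact h
        have ht0 : etaR q q = 0 := by linarith
        have hc0 : etaR p q = 0 := by
          have : b * etaR p q = 0 := by rw [← e1, hs0]; ring
          rcases mul_eq_zero.mp this with h | h
          · exact absurd h hb
          · exact h
        obtain ⟨γ, hγ⟩ := dependent_of_nonpos p q hs0.le ht0.le hc0 hp0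
        exact hindep γ hγ
      subst ha
      have hc : etaR p q = 0 := by
        have : b * etaR p q = 0 := by rw [← e1]; ring
        rcases mul_eq_zero.mp this with h | h
        · exact absurd h hb
        · exact h
      have hst : etaR p p = etaR q q := by
        have : b * (etaR p p - etaR q q) = 0 := by linarith
        rcases mul_eq_zero.mp this with h | h
        · exact absurd h hb
        · linarith
      have hs : 0 < etaR p p := by
        rcases lt_trichotomy (etaR p p) 0 with h | h | h
        · exfalso
          obtain ⟨γ, hγ⟩ := dependent_of_nonpos p q h.le (hst ▸ h.le) hc hp0
          exact hindep γ hγ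
        · exfalso
          obtain ⟨γ, hγ⟩ := dependent_of_nonpos p q h.le (hst ▸ h.le) hc hp0
          exact hindep γ hγ
        · exact h
      have hXp' : ((eta n)⁻¹ * F).mulVec p = (-b) • q := by
        rw [hXp, zero_smul, zero_sub, neg_smul]
      have hXq' : ((eta n)⁻¹ * F).mulVec q = b • p := by
        rw [hXq, zero_smul, add_zero]
      obtain ⟨P, Q, B, hBpos, hPspan, hQspan, hXP, hXQ, hPP, hQQ, hPQ⟩ :=
        make_plane hb hXp' hXq' hs hst hc
      have hspanU : Submodule.span ℝ ({p, q} : Set (Fin (n+1) → ℝ)) ≤ U := by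
        rw [Submodule.span_le]
        rintro z (rfl | rfl)
        · exact hpU
        · exact hqU
      have hPU : P ∈ U := hspanU hPspan
      have hQU2 : Q ∈ U := hspanU hQspan
      set U' := U ⊓ perp {P} ⊓ perp {Q} with hU'
      have memU' : ∀ x, x ∈ U' ↔ x ∈ U ∧ etaR P x = 0 ∧ etaR Q x = 0 := by
        intro x
        constructor
        · rintro ⟨⟨h1, h2⟩, h3⟩
          exact ⟨h1, mem_perp_singleton.mp h2, mem_perp_singleton.mp h3⟩
        · rintro ⟨h1, h2, h3⟩
          exact ⟨⟨h1, mem_perp_singleton.mpr h2⟩, mem_perp_singleton.mpr h3⟩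
      have hsplit1 : finrank ℝ (U ⊓ perp {P} : Submodule ℝ (Fin (n+1) → ℝ)) + 1
          = finrank ℝ U := split1 U P hPU (by rw [hPP]; exact one_ne_zero)
      have hQmem : Q ∈ U ⊓ perp {P} := ⟨hQU2, mem_perp_singleton.mpr hPQ⟩
      have hsplit2 : finrank ℝ (U ⊓ perp {P} ⊓ perp {Q} : Submodule ℝ (Fin (n+1) → ℝ)) + 1
          = finrank ℝ (U ⊓ perp {P} : Submodule ℝ (Fin (n+1) → ℝ)) :=
        split1 _ Q hQmem (by rw [hQQ]; exact one_ne_zero)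
      have hd' : finrank ℝ U' = d - 2 := by rw [hU']; omega
      have hinv' : ∀ x ∈ U', ((eta n)⁻¹ * F).mulVec x ∈ U' := by
        intro x hx
        rw [memU'] at hx ⊢
        obtain ⟨hxU, hxP, hxQ⟩ := hx
        refine ⟨hinv x hxU, ?_, ?_⟩
        · have := skew_eta F hF P x
          rw [hXP, etaR_smul_left, hxQ] at this
          linarith
        · have := skew_eta F hF Q x
          rw [hXQ, etaR_smul_left, hxP] at this
          linarith
      have hinj' : ∀ x ∈ U', ((eta n)⁻¹ * F).mulVec x = 0 → x = 0 := by
        intro x hx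
        exact hinj x ((memU' x).mp hx).1
      -- a timelike vector survives in U'
      set α := etaR P w with hα
      set β := etaR Q w with hβ
      set w' := w - α • P - β • Q with hw'
      have hw'U : w' ∈ U' := by
        rw [memU']
        refine ⟨Submodule.sub_mem U (Submodule.sub_mem U hwU
          (Submodule.smul_mem U α hPU)) (Submodule.smul_mem U β hQU2), ?_, ?_⟩
        · rw [hw', etaR_sub_right, etaR_sub_right, etaR_smul_right, etaR_smul_right,
            hPP, hPQ, ← hα]
          ring
        · rw [hw', etaR_sub_right, etaR_sub_right, etaR_smul_right, etaR_smul_right,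
            hQQ, ← hβ]
          rw [etaR_comm Q P] at *
          rw [hPQ]
          ring
      have hw'w' : etaR w' w' < 0 := by
        have expand : etaR w' w' = etaR w w - α^2 - β^2 := by
          rw [hw']
          simp only [etaR_sub_left, etaR_sub_right, etaR_smul_left, etaR_smul_right]
          rw [etaR_comm w P, etaR_comm w Q, etaR_comm Q P, hPP, hQQ, hPQ, ← hα, ← hβ]
          ring
        rw [expand]
        nlinarith [sq_nonneg α, sq_nonneg β]
      obtain ⟨a', ha', u, v, huU', hvU', hXu, hXv, huu, hvv, huv⟩ :=
        ih (d - 2) (by omega) U' hd' hinv' hinj' ⟨w', hw'U, hw'w'⟩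
      have hUsub : U' ≤ U := le_trans inf_le_left inf_le_left
      exact ⟨a', ha', u, v, hUsub huU', hUsub hvU', hXu, hXv, huu, hvv, huv⟩

end Boost


section GS
variable {n : ℕ}

open Module

lemma gram_schmidt (d : ℕ) :
    ∀ (U : Submodule ℝ (Fin (n+1) → ℝ)), finrank ℝ U = d →
    (∀ x ∈ U, x ≠ 0 → 0 < etaR x x) →
    ∃ e : Fin d → (Fin (n+1) → ℝ), (∀ i, e i ∈ U) ∧
      (∀ i j, etaR (e i) (e j) = if i = j then 1 else 0) := by
  induction d with
  | zero => exact fun U _ _ => ⟨Fin.elim0, fun i => i.elim0, fun i => i.elim0⟩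
  | succ d ihd =>
    intro U hd hpos
    have hUne : U ≠ ⊥ := by
      intro h
      rw [h, finrank_bot] at hd
      omega
    obtain ⟨x, hxU, hx0⟩ := Submodule.exists_mem_ne_zero_of_ne_bot hUne
    have hs : 0 < etaR x x := hpos x hxU hx0
    set w := Real.sqrt (etaR x x) with hw
    have hwpos : 0 < w := Real.sqrt_pos.mpr hs
    have hw2 : w * w = etaR x x := Real.mul_self_sqrt hs.le
    set e₀ := w⁻¹ • x with he₀
    have he₀U : e₀ ∈ U := Submodule.smul_mem U _ hxU
    have he₀e₀ : etaR e₀ e₀ = 1 := by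
      rw [he₀, etaR_smul_left, etaR_smul_right, ← hw2]
      field_simp
    have hsplit : finrank ℝ (U ⊓ perp {e₀} : Submodule ℝ (Fin (n+1) → ℝ)) + 1
        = finrank ℝ U := split1 U e₀ he₀U (by rw [he₀e₀]; exact one_ne_zero)
    have hd' : finrank ℝ (U ⊓ perp {e₀} : Submodule ℝ (Fin (n+1) → ℝ)) = d := by omega
    have hpos' : ∀ y ∈ U ⊓ perp {e₀}, y ≠ 0 → 0 < etaR y y := by
      intro y hy
      exact hpos y hy.1
    obtain ⟨e', he'U, he'G⟩ := ihd (U ⊓ perp {e₀}) hd' hpos'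
    refine ⟨Fin.cons e₀ e', ?_, ?_⟩
    · intro i
      refine Fin.cases ?_ (fun j => ?_) i
      · exact he₀U
      · exact (he'U j).1
    · intro i j
      refine Fin.cases ?_ (fun i' => ?_) i <;> refine Fin.cases ?_ (fun j' => ?_) j
      · simpa using he₀e₀
      · have := mem_perp_singleton.mp (he'U j').2
        simpa [(Fin.succ_ne_zero j').symm] using this
      · have := mem_perp_singleton.mp (he'U i').2
        rw [etaR_comm] at this
        simpa using this
      · have := he'G i' j'
        simp only [Fin.cons_succ]
        rw [this]
        simp [Fin.succ_inj]

end GS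


section Assembly
variable {n : ℕ}

open Module

lemma conj_entry (M : Matrix (Fin (n+1)) (Fin (n+1)) ℝ)
    (c : Fin (n+1) → Fin (n+1) → ℝ) (μ ν : Fin (n+1)) :
    ((Matrix.of fun i μ' => c μ' i)ᵀ * M * (Matrix.of fun i μ' => c μ' i)) μ ν
      = c μ ⬝ᵥ M.mulVec (c ν) := by
  rw [Matrix.mul_apply]
  simp only [Matrix.mul_apply, Matrix.transpose_apply, Matrix.of_apply,
    Matrix.mulVec, dotProduct]
  simp_rw [Finset.sum_mul, Finset.mul_sum, ← mul_assoc]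
  rw [Finset.sum_comm]

lemma eta_conj_entry (c : Fin (n+1) → Fin (n+1) → ℝ) (μ ν : Fin (n+1)) :
    ((Matrix.of fun i μ' => c μ' i)ᵀ * eta n * (Matrix.of fun i μ' => c μ' i)) μ ν
      = etaR (c μ) (c ν) := by
  rw [conj_entry, etaR_eq_dot]

lemma dx_apply' (A B : ℕ) (μ ν : Fin (n+1)) :
    dx n A B μ ν = if (μ:ℕ) = A ∧ (ν:ℕ) = B then (1:ℝ)
      else if (μ:ℕ) = B ∧ (ν:ℕ) = A then -1 else 0 := rfl

lemma sum_dx_zero {r : ℕ} (bb : Fin r → ℝ) (μ ν : Fin (n+1))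
    (h : ∀ l : Fin r, ¬((μ:ℕ) = 2*(l:ℕ)+2 ∧ (ν:ℕ) = 2*(l:ℕ)+3) ∧
      ¬((μ:ℕ) = 2*(l:ℕ)+3 ∧ (ν:ℕ) = 2*(l:ℕ)+2)) :
    (∑ l : Fin r, bb l • dx n (2*(l:ℕ)+2) (2*(l:ℕ)+3)) μ ν = 0 := by
  rw [Matrix.sum_apply]
  refine Finset.sum_eq_zero fun l _ => ?_
  rw [Matrix.smul_apply, dx_apply', if_neg (h l).1, if_neg (h l).2]
  simp

lemma sum_dx_pq {r : ℕ} (bb : Fin r → ℝ) (i : Fin r) (μ ν : Fin (n+1))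
    (hμ : (μ:ℕ) = 2*(i:ℕ)+2) (hν : (ν:ℕ) = 2*(i:ℕ)+3) :
    (∑ l : Fin r, bb l • dx n (2*(l:ℕ)+2) (2*(l:ℕ)+3)) μ ν = bb i := by
  rw [Matrix.sum_apply]
  rw [Finset.sum_eq_single i]
  · rw [Matrix.smul_apply, dx_apply', if_pos ⟨hμ, hν⟩]
    simp
  · intro l _ hl
    have hlv : (l:ℕ) ≠ (i:ℕ) := fun hc => hl (Fin.ext hc)
    rw [Matrix.smul_apply, dx_apply', if_neg (by omega), if_neg (by omega)]
    simp
  · intro h; exact absurd (Finset.mem_univ i) h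

lemma sum_dx_qp {r : ℕ} (bb : Fin r → ℝ) (i : Fin r) (μ ν : Fin (n+1))
    (hμ : (μ:ℕ) = 2*(i:ℕ)+3) (hν : (ν:ℕ) = 2*(i:ℕ)+2) :
    (∑ l : Fin r, bb l • dx n (2*(l:ℕ)+2) (2*(l:ℕ)+3)) μ ν = -(bb i) := by
  rw [Matrix.sum_apply]
  rw [Finset.sum_eq_single i]
  · rw [Matrix.smul_apply, dx_apply', if_neg (by omega), if_pos ⟨hμ, hν⟩]
    simp
  · intro l _ hl
    have hlv : (l:ℕ) ≠ (i:ℕ) := fun hc => hl (Fin.ext hc)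
    rw [Matrix.smul_apply, dx_apply', if_neg (by omega), if_neg (by omega)]
    simp
  · intro h; exact absurd (Finset.mem_univ i) h

end Assembly


end CFSK

set_option maxHeartbeats 2000000 in
open CFSK Module in
/-- If the real kernel of `♯F` is nonzero and spacelike, then `F` is
Lorentz-equivalent to `a·dx⁰dx¹ + Σ_{i=1}^r b_i·dx^{2i}dx^{2i+1}` with `a > 0`. -/
theorem canonical_form_spacelike_kernel (n : ℕ)
    (F : Matrix (Fin (n+1)) (Fin (n+1)) ℝ) (hF : Fᵀ = -F)
    (hne : ∃ v : Fin (n+1) → ℝ, ((eta n)⁻¹ * F).mulVec v = 0 ∧ v ≠ 0)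
    (hsp : ∀ v : Fin (n+1) → ℝ, ((eta n)⁻¹ * F).mulVec v = 0 → v ≠ 0 →
      0 < etaR v v) :
    ∃ (Λ : Matrix (Fin (n+1)) (Fin (n+1)) ℝ), Λᵀ * eta n * Λ = eta n ∧
    ∃ (a : ℝ), 0 < a ∧
    ∃ (r : ℕ) (hr : 2 * r + 1 ≤ n) (b : Fin r → ℝ), DecreasingPos b ∧
      Λᵀ * F * Λ =
        a • dx n 0 1 + ∑ i : Fin r, b i • dx n (2 * (i : ℕ) + 2) (2 * (i : ℕ) + 3) := by
  classical
  set Bf : LinearMap.BilinForm ℝ (Fin (n+1) → ℝ) := Matrix.toBilin' (eta n) with hBf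
  have hBeta : ∀ x y, Bf x y = etaR x y := fun x y => by
    rw [hBf, Matrix.toBilin'_apply', ← etaR_eq_dot]
  set K : Submodule ℝ (Fin (n+1) → ℝ) :=
    LinearMap.ker (Matrix.mulVecLin ((eta n)⁻¹ * F)) with hK
  have hmemK : ∀ x, x ∈ K ↔ ((eta n)⁻¹ * F).mulVec x = 0 := fun x => by
    rw [hK, LinearMap.mem_ker, Matrix.mulVecLin_apply]
  set W := Bf.orthogonal K with hW
  have hmemW : ∀ x, x ∈ W ↔ ∀ y ∈ K, etaR y x = 0 := fun x => by
    rw [hW, LinearMap.BilinForm.mem_orthogonal_iff]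
    constructor
    · intro h y hy
      rw [← hBeta]
      exact h y hy
    · intro h y hy
      have := h y hy
      rw [← hBeta] at this
      exact this
  have hrefl : Bf.IsRefl := by
    intro x y h
    rw [hBeta] at h ⊢
    rw [etaR_comm]
    exact h
  have hndK : (Bf.restrict K).Nondegenerate := by
    refine (LinearMap.IsRefl.nondegenerate_iff_separatingLeft (B := Bf.restrict K)
      (fun x y h => hrefl _ _ h)).mpr ?_
    intro z hz
    have hzz : Bf (z : Fin (n+1) → ℝ) (z : Fin (n+1) → ℝ) = 0 := by
      have := hz z
      simpa using this
    by_contra hz0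
    have hzv0 : (z : Fin (n+1) → ℝ) ≠ 0 := fun h => hz0 (Subtype.ext h)
    have := hsp (z : Fin (n+1) → ℝ) ((hmemK _).mp z.2) hzv0
    rw [hBeta] at hzz
    linarith
  have hcompl : IsCompl K W :=
    LinearMap.BilinForm.isCompl_orthogonal_of_restrict_nondegenerate hrefl hndK
  have hrankV : finrank ℝ (Fin (n+1) → ℝ) = n+1 := Module.finrank_fin_fun ℝ
  have hdims : finrank ℝ K + finrank ℝ W = n+1 := by
    rw [Submodule.finrank_add_eq_of_isCompl hcompl, hrankV]
  obtain ⟨v0, hv0K, hv00⟩ := hne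
  have hKpos : 0 < finrank ℝ K := by
    have : Nontrivial ↥K :=
      nontrivial_of_ne ⟨v0, (hmemK v0).mpr hv0K⟩ 0 (by simp [Subtype.ext_iff, hv00])
    exact finrank_pos
  have hKposdef : ∀ x ∈ K, x ≠ 0 → 0 < etaR x x := fun x hx hx0 =>
    hsp x ((hmemK x).mp hx) hx0
  have hWinv : ∀ x ∈ W, ((eta n)⁻¹ * F).mulVec x ∈ W := by
    intro x hx
    rw [hmemW]
    intro y hy
    have hXy : ((eta n)⁻¹ * F).mulVec y = 0 := (hmemK y).mp hy
    have := skew_eta F hF y x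
    rw [hXy, etaR_zero_left] at this
    linarith
  have hWinj : ∀ x ∈ W, ((eta n)⁻¹ * F).mulVec x = 0 → x = 0 := by
    intro x hxW hXx
    have hxK : x ∈ K := (hmemK x).mpr hXx
    have hxx : etaR x x = 0 := ((hmemW x).mp hxW) x hxK
    by_contra hx0
    have := hsp x hXx hx0
    linarith
  have hWtime : ∃ w ∈ W, etaR w w < 0 := by
    have htop : K ⊔ W = ⊤ := hcompl.codisjoint.eq_top
    have he0mem : (Pi.single (0 : Fin (n+1)) (1:ℝ)) ∈ K ⊔ W := by
      rw [htop]; trivial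
    obtain ⟨y, hyK, z, hzW, hyz⟩ := Submodule.mem_sup.mp he0mem
    have he0e0 : etaR (Pi.single (0 : Fin (n+1)) (1:ℝ)) (Pi.single (0 : Fin (n+1)) (1:ℝ))
        = -1 := by
      unfold etaR
      rw [Finset.sum_eq_single (0 : Fin (n+1))]
      · simp
      · intro i _ hi
        simp [Pi.single_eq_of_ne hi]
      · intro h; exact absurd (Finset.mem_univ _) h
    have hyz0 : etaR y z = 0 := ((hmemW z).mp hzW) y hyK
    have hyy : 0 ≤ etaR y y := by
      rcases eq_or_ne y 0 with h | h
      · rw [h, etaR_zero_left]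
      · exact (hKposdef y hyK h).le
    refine ⟨z, hzW, ?_⟩
    have hexp : etaR (Pi.single (0 : Fin (n+1)) (1:ℝ)) (Pi.single (0 : Fin (n+1)) (1:ℝ))
        = etaR y y + 2 * etaR y z + etaR z z := by
      rw [← hyz, etaR_add_left, etaR_add_right, etaR_add_right, etaR_comm z y]
      ring
    rw [he0e0] at hexp
    linarith
  obtain ⟨a, hapos, u, v, huW, hvW, hXu, hXv, huu, hvv, huv⟩ :=
    boost_decomp F hF (finrank ℝ W) W rfl hWinv hWinj hWtime
  set s2 : ℝ := (Real.sqrt 2)⁻¹ with hs2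
  have hs2sq : s2 * s2 = 1/2 := by
    rw [hs2, ← mul_inv, Real.mul_self_sqrt (by norm_num : (0:ℝ) ≤ 2)]
    norm_num
  have hs2ne : s2 ≠ 0 := by
    intro h
    rw [h] at hs2sq
    norm_num at hs2sq
  set c0 := s2 • (u + v) with hc0def
  set c1 := s2 • (v - u) with hc1def
  have hc0W : c0 ∈ W := Submodule.smul_mem _ _ (Submodule.add_mem _ huW hvW)
  have hc1W : c1 ∈ W := Submodule.smul_mem _ _ (Submodule.sub_mem _ hvW huW)
  have g00 : etaR c0 c0 = -1 := by
    rw [hc0def, etaR_smul_left, etaR_smul_right, etaR_add_left, etaR_add_right,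
      etaR_add_right, etaR_comm v u, huu, hvv, huv]
    linear_combination (-2 : ℝ) * hs2sq
  have g11 : etaR c1 c1 = 1 := by
    rw [hc1def, etaR_smul_left, etaR_smul_right, etaR_sub_left, etaR_sub_right,
      etaR_sub_right, etaR_comm v u, huu, hvv, huv]
    linear_combination (2 : ℝ) * hs2sq
  have g01 : etaR c0 c1 = 0 := by
    rw [hc0def, hc1def, etaR_smul_left, etaR_smul_right, etaR_add_left, etaR_sub_right,
      etaR_sub_right, etaR_comm v u, huu, hvv, huv]
    ring
  have hXc0 : ((eta n)⁻¹ * F).mulVec c0 = (-a) • c1 := by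
    rw [hc0def, Matrix.mulVec_smul, Matrix.mulVec_add, hXu, hXv, hc1def, smul_comm]
    congr 1
    module
  have hXc1 : ((eta n)⁻¹ * F).mulVec c1 = (-a) • c0 := by
    rw [hc1def, Matrix.mulVec_smul, Matrix.mulVec_sub, hXu, hXv, hc0def, smul_comm]
    congr 1
    module
  set U1 := W ⊓ perp {c0} ⊓ perp {c1} with hU1
  have memU1 : ∀ x, x ∈ U1 ↔ x ∈ W ∧ etaR c0 x = 0 ∧ etaR c1 x = 0 := by
    intro x
    constructor
    · rintro ⟨⟨h1, h2⟩, h3⟩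
      exact ⟨h1, mem_perp_singleton.mp h2, mem_perp_singleton.mp h3⟩
    · rintro ⟨h1, h2, h3⟩
      exact ⟨⟨h1, mem_perp_singleton.mpr h2⟩, mem_perp_singleton.mpr h3⟩
  have hu0 : u ≠ 0 := by
    intro h
    rw [h, etaR_zero_left] at huv
    norm_num at huv
  have hU1pos : ∀ x ∈ U1, x ≠ 0 → 0 < etaR x x := by
    intro x hx hx0
    obtain ⟨hxW, hxc0, hxc1⟩ := (memU1 x).mp hx
    by_contra hle
    push_neg at hle
    have e1 : etaR c0 x = s2 * (etaR u x + etaR v x) := by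
      rw [hc0def, etaR_smul_left, etaR_add_left]
    have e2 : etaR c1 x = s2 * (etaR v x - etaR u x) := by
      rw [hc1def, etaR_smul_left, etaR_sub_left]
    rw [hxc0] at e1
    rw [hxc1] at e2
    have hsum : etaR u x + etaR v x = 0 := by
      rcases mul_eq_zero.mp e1.symm with h | h
      · exact absurd h hs2ne
      · exact h
    have hdiff : etaR v x - etaR u x = 0 := by
      rcases mul_eq_zero.mp e2.symm with h | h
      · exact absurd h hs2ne
      · exact h
    have hux : etaR u x = 0 := by linarith
    have hvx : etaR v x = 0 := by linarith
    obtain ⟨γ, hγ⟩ := dependent_of_nonpos u x huu.le hle hux hu0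
    rw [hγ, etaR_smul_right] at hvx
    rw [etaR_comm u v] at huv
    have hγ0 : γ = 0 := by
      rcases mul_eq_zero.mp hvx with h | h
      · exact h
      · rw [h] at huv; norm_num at huv
    rw [hγ0, zero_smul] at hγ
    exact hx0 hγ
  have hU1inv : ∀ x ∈ U1, ((eta n)⁻¹ * F).mulVec x ∈ U1 := by
    intro x hx
    obtain ⟨hxW, hxc0, hxc1⟩ := (memU1 x).mp hx
    rw [memU1]
    refine ⟨hWinv x hxW, ?_, ?_⟩
    · have := skew_eta F hF c0 x
      rw [hXc0, etaR_smul_left, hxc1] at this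
      linarith
    · have := skew_eta F hF c1 x
      rw [hXc1, etaR_smul_left, hxc0] at this
      linarith
  have hU1inj : ∀ x ∈ U1, ((eta n)⁻¹ * F).mulVec x = 0 → x = 0 := by
    intro x hx hXx
    exact hWinj x ((memU1 x).mp hx).1 hXx
  have hsplitW1 : finrank ℝ (W ⊓ perp {c0} : Submodule ℝ (Fin (n+1) → ℝ)) + 1
      = finrank ℝ W := split1 W c0 hc0W (by rw [g00]; norm_num)
  have hc1mem : c1 ∈ W ⊓ perp {c0} := ⟨hc1W, mem_perp_singleton.mpr g01⟩
  have hsplitW2 : finrank ℝ (W ⊓ perp {c0} ⊓ perp {c1} : Submodule ℝ (Fin (n+1) → ℝ)) + 1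
      = finrank ℝ (W ⊓ perp {c0} : Submodule ℝ (Fin (n+1) → ℝ)) :=
    split1 _ c1 hc1mem (by rw [g11]; norm_num)
  obtain ⟨r, hUr, pp, qq, bb, hppU, hqqU, hbb, hXpp, hXqq, hGpp, hGqq, hGpq⟩ :=
    rot_decomp F hF (finrank ℝ U1) U1 rfl hU1inv hU1inj hU1pos
  set k := finrank ℝ K with hk
  have hcount : 2 + 2*r + k = n + 1 := by
    have h1 : finrank ℝ U1 + 2 = finrank ℝ W := by rw [hU1]; omega
    omega
  have hrn : 2*r + 1 ≤ n := by omega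
  obtain ⟨ee, heeK, hGee⟩ := gram_schmidt k K rfl hKposdef
  -- sorted version
  set σ := Tuple.sort (fun i => - bb i) with hσ
  set bb' := fun i => bb (σ i) with hbb'def
  set pp' := fun i => pp (σ i) with hpp'def
  set qq' := fun i => qq (σ i) with hqq'def
  have hdec : DecreasingPos bb' := by
    constructor
    · intro i j hij
      have := Tuple.monotone_sort (fun i => - bb i) hij
      simp only [Function.comp_apply] at this
      rw [hbb'def]
      simp only []
      linarith
    · intro i
      exact hbb (σ i)
  have hXpp' : ∀ i, ((eta n)⁻¹ * F).mulVec (pp' i) = (-(bb' i)) • qq' i := fun i => hXpp (σ i)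
  have hXqq' : ∀ i, ((eta n)⁻¹ * F).mulVec (qq' i) = bb' i • pp' i := fun i => hXqq (σ i)
  have hppU' : ∀ i, pp' i ∈ U1 := fun i => hppU (σ i)
  have hqqU' : ∀ i, qq' i ∈ U1 := fun i => hqqU (σ i)
  have hGpp' : ∀ i j, etaR (pp' i) (pp' j) = if i = j then 1 else 0 := by
    intro i j
    rw [hpp'def]
    simp only []
    rw [hGpp (σ i) (σ j)]
    simp [EmbeddingLike.apply_eq_iff_eq]
  have hGqq' : ∀ i j, etaR (qq' i) (qq' j) = if i = j then 1 else 0 := by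
    intro i j
    rw [hqq'def]
    simp only []
    rw [hGqq (σ i) (σ j)]
    simp [EmbeddingLike.apply_eq_iff_eq]
  have hGpq' : ∀ i j, etaR (pp' i) (qq' j) = 0 := fun i j => hGpq (σ i) (σ j)
  have hbb'pos : ∀ i, 0 < bb' i := fun i => hbb (σ i)
  -- the orthonormal column family
  set c : Fin (n+1) → Fin (n+1) → ℝ := fun μ =>
    if h0 : (μ:ℕ) = 0 then c0 else if h1 : (μ:ℕ) = 1 then c1
    else if h2 : (μ:ℕ) < 2*r+2 then
      (if (μ:ℕ) % 2 = 0 then pp' ⟨((μ:ℕ)-2)/2, by omega⟩ else qq' ⟨((μ:ℕ)-2)/2, by omega⟩)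
    else ee ⟨(μ:ℕ) - (2*r+2), by have := μ.isLt; omega⟩ with hcdef
  have hcv0 : ∀ μ : Fin (n+1), (μ:ℕ) = 0 → c μ = c0 := by
    intro μ h
    simp only [hcdef]
    rw [dif_pos h]
  have hcv1 : ∀ μ : Fin (n+1), (μ:ℕ) = 1 → c μ = c1 := by
    intro μ h
    simp only [hcdef]
    rw [dif_neg (by omega), dif_pos h]
  have hcvp : ∀ (μ : Fin (n+1)) (i : Fin r), (μ:ℕ) = 2*(i:ℕ)+2 → c μ = pp' i := by
    intro μ i h
    have hi := i.isLt
    simp only [hcdef]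
    rw [dif_neg (by omega), dif_neg (by omega), dif_pos (by omega), if_pos (by omega)]
    exact congrArg pp' (Fin.ext (show ((μ:ℕ)-2)/2 = (i:ℕ) by omega))
  have hcvq : ∀ (μ : Fin (n+1)) (i : Fin r), (μ:ℕ) = 2*(i:ℕ)+3 → c μ = qq' i := by
    intro μ i h
    have hi := i.isLt
    simp only [hcdef]
    rw [dif_neg (by omega), dif_neg (by omega), dif_pos (by omega), if_neg (by omega)]
    exact congrArg qq' (Fin.ext (show ((μ:ℕ)-2)/2 = (i:ℕ) by omega))
  have hcve : ∀ (μ : Fin (n+1)) (j : Fin k), (μ:ℕ) = 2*r+2+(j:ℕ) → c μ = ee j := by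
    intro μ j h
    have hj := j.isLt
    simp only [hcdef]
    rw [dif_neg (by omega), dif_neg (by omega), dif_neg (by omega)]
    exact congrArg ee (Fin.ext (show (μ:ℕ) - (2*r+2) = (j:ℕ) by omega))
  have hclass : ∀ μ : Fin (n+1), (μ:ℕ) = 0 ∨ (μ:ℕ) = 1 ∨ (∃ i : Fin r, (μ:ℕ) = 2*(i:ℕ)+2) ∨
      (∃ i : Fin r, (μ:ℕ) = 2*(i:ℕ)+3) ∨ (∃ j : Fin k, (μ:ℕ) = 2*r+2+(j:ℕ)) := by
    intro μ
    have hμ := μ.isLt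
    by_cases h0 : (μ:ℕ) = 0
    · exact Or.inl h0
    by_cases h1 : (μ:ℕ) = 1
    · exact Or.inr (Or.inl h1)
    by_cases h2 : (μ:ℕ) < 2*r+2
    · by_cases hpar : (μ:ℕ) % 2 = 0
      · exact Or.inr (Or.inr (Or.inl ⟨⟨((μ:ℕ)-2)/2, by omega⟩, by
          simp only [Fin.val_mk]; omega⟩))
      · exact Or.inr (Or.inr (Or.inr (Or.inl ⟨⟨((μ:ℕ)-2)/2, by omega⟩, by
          simp only [Fin.val_mk]; omega⟩)))
    · exact Or.inr (Or.inr (Or.inr (Or.inr ⟨⟨(μ:ℕ)-(2*r+2), by omega⟩, by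
        simp only [Fin.val_mk]; omega⟩)))
  have hPc0 : ∀ i, etaR c0 (pp' i) = 0 := fun i => ((memU1 _).mp (hppU' i)).2.1
  have hPc1 : ∀ i, etaR c1 (pp' i) = 0 := fun i => ((memU1 _).mp (hppU' i)).2.2
  have hQc0 : ∀ i, etaR c0 (qq' i) = 0 := fun i => ((memU1 _).mp (hqqU' i)).2.1
  have hQc1 : ∀ i, etaR c1 (qq' i) = 0 := fun i => ((memU1 _).mp (hqqU' i)).2.2
  have hEc0 : ∀ j, etaR (ee j) c0 = 0 := fun j => ((hmemW c0).mp hc0W) (ee j) (heeK j)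
  have hEc1 : ∀ j, etaR (ee j) c1 = 0 := fun j => ((hmemW c1).mp hc1W) (ee j) (heeK j)
  have hppW : ∀ i, pp' i ∈ W := fun i => ((memU1 _).mp (hppU' i)).1
  have hqqW : ∀ i, qq' i ∈ W := fun i => ((memU1 _).mp (hqqU' i)).1
  have hEp : ∀ j i, etaR (ee j) (pp' i) = 0 := fun j i => ((hmemW _).mp (hppW i)) (ee j) (heeK j)
  have hEq : ∀ j i, etaR (ee j) (qq' i) = 0 := fun j i => ((hmemW _).mp (hqqW i)) (ee j) (heeK j)
  have hXee : ∀ j, ((eta n)⁻¹ * F).mulVec (ee j) = 0 := fun j => (hmemK _).mp (heeK j)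
  have hGram : ∀ μ ν : Fin (n+1), etaR (c μ) (c ν) =
      if μ = ν then (if (μ:ℕ) = 0 then (-1:ℝ) else 1) else 0 := by
    intro μ ν
    rcases hclass μ with h | h | ⟨i, h⟩ | ⟨i, h⟩ | ⟨j, h⟩ <;>
      rcases hclass ν with h' | h' | ⟨i', h'⟩ | ⟨i', h'⟩ | ⟨j', h'⟩
    · rw [hcv0 μ h, hcv0 ν h', g00, if_pos (show μ = ν by rw [Fin.ext_iff]; omega), if_pos h]
    · rw [hcv0 μ h, hcv1 ν h', g01, if_neg (show ¬ μ = ν by rw [Fin.ext_iff]; omega)]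
    · rw [hcv0 μ h, hcvp ν i' h', hPc0 i',
        if_neg (show ¬ μ = ν by rw [Fin.ext_iff]; omega)]
    · rw [hcv0 μ h, hcvq ν i' h', hQc0 i',
        if_neg (show ¬ μ = ν by rw [Fin.ext_iff]; omega)]
    · rw [hcv0 μ h, hcve ν j' h', etaR_comm, hEc0 j',
        if_neg (show ¬ μ = ν by rw [Fin.ext_iff]; omega)]
    · rw [hcv1 μ h, hcv0 ν h', etaR_comm, g01,
        if_neg (show ¬ μ = ν by rw [Fin.ext_iff]; omega)]
    · rw [hcv1 μ h, hcv1 ν h', g11, if_pos (show μ = ν by rw [Fin.ext_iff]; omega),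
        if_neg (show ¬ (μ:ℕ) = 0 by omega)]
    · rw [hcv1 μ h, hcvp ν i' h', hPc1 i',
        if_neg (show ¬ μ = ν by rw [Fin.ext_iff]; omega)]
    · rw [hcv1 μ h, hcvq ν i' h', hQc1 i',
        if_neg (show ¬ μ = ν by rw [Fin.ext_iff]; omega)]
    · rw [hcv1 μ h, hcve ν j' h', etaR_comm, hEc1 j',
        if_neg (show ¬ μ = ν by rw [Fin.ext_iff]; omega)]
    · rw [hcvp μ i h, hcv0 ν h', etaR_comm, hPc0 i,
        if_neg (show ¬ μ = ν by rw [Fin.ext_iff]; omega)]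
    · rw [hcvp μ i h, hcv1 ν h', etaR_comm, hPc1 i,
        if_neg (show ¬ μ = ν by rw [Fin.ext_iff]; omega)]
    · rw [hcvp μ i h, hcvp ν i' h', hGpp' i i']
      by_cases hii : i = i'
      · subst hii
        rw [if_pos rfl, if_pos (show μ = ν by rw [Fin.ext_iff]; omega),
          if_neg (show ¬ (μ:ℕ) = 0 by omega)]
      · have hvv' : (i:ℕ) ≠ (i':ℕ) := fun hc => hii (Fin.ext hc)
        rw [if_neg hii, if_neg (show ¬ μ = ν by rw [Fin.ext_iff]; omega)]
    · rw [hcvp μ i h, hcvq ν i' h', hGpq' i i',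
        if_neg (show ¬ μ = ν by rw [Fin.ext_iff]; omega)]
    · rw [hcvp μ i h, hcve ν j' h', etaR_comm, hEp j' i,
        if_neg (show ¬ μ = ν by rw [Fin.ext_iff]; omega)]
    · rw [hcvq μ i h, hcv0 ν h', etaR_comm, hQc0 i,
        if_neg (show ¬ μ = ν by rw [Fin.ext_iff]; omega)]
    · rw [hcvq μ i h, hcv1 ν h', etaR_comm, hQc1 i,
        if_neg (show ¬ μ = ν by rw [Fin.ext_iff]; omega)]
    · rw [hcvq μ i h, hcvp ν i' h', etaR_comm, hGpq' i' i,
        if_neg (show ¬ μ = ν by rw [Fin.ext_iff]; omega)]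
    · rw [hcvq μ i h, hcvq ν i' h', hGqq' i i']
      by_cases hii : i = i'
      · subst hii
        rw [if_pos rfl, if_pos (show μ = ν by rw [Fin.ext_iff]; omega),
          if_neg (show ¬ (μ:ℕ) = 0 by omega)]
      · have hvv' : (i:ℕ) ≠ (i':ℕ) := fun hc => hii (Fin.ext hc)
        rw [if_neg hii, if_neg (show ¬ μ = ν by rw [Fin.ext_iff]; omega)]
    · rw [hcvq μ i h, hcve ν j' h', etaR_comm, hEq j' i,
        if_neg (show ¬ μ = ν by rw [Fin.ext_iff]; omega)]
    · rw [hcve μ j h, hcv0 ν h', hEc0 j,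
        if_neg (show ¬ μ = ν by rw [Fin.ext_iff]; omega)]
    · rw [hcve μ j h, hcv1 ν h', hEc1 j,
        if_neg (show ¬ μ = ν by rw [Fin.ext_iff]; omega)]
    · rw [hcve μ j h, hcvp ν i' h', hEp j i',
        if_neg (show ¬ μ = ν by rw [Fin.ext_iff]; omega)]
    · rw [hcve μ j h, hcvq ν i' h', hEq j i',
        if_neg (show ¬ μ = ν by rw [Fin.ext_iff]; omega)]
    · rw [hcve μ j h, hcve ν j' h', hGee j j']
      by_cases hjj : j = j'
      · subst hjj
        rw [if_pos rfl, if_pos (show μ = ν by rw [Fin.ext_iff]; omega),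
          if_neg (show ¬ (μ:ℕ) = 0 by omega)]
      · have hvv' : (j:ℕ) ≠ (j':ℕ) := fun hc => hjj (Fin.ext hc)
        rw [if_neg hjj, if_neg (show ¬ μ = ν by rw [Fin.ext_iff]; omega)]
  refine ⟨Matrix.of (fun i μ => c μ i), ?_, a, hapos, r, hrn, bb', hdec, ?_⟩
  · ext μ ν
    rw [eta_conj_entry, hGram μ ν, eta, Matrix.diagonal_apply]
  · ext μ ν
    rw [conj_entry]
    show Fbil F (c μ) (c ν) = _
    rw [← fbil_eq]
    rw [Matrix.add_apply, Matrix.smul_apply, dx_apply']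
    rcases hclass μ with h | h | ⟨i, h⟩ | ⟨i, h⟩ | ⟨j, h⟩ <;>
      rcases hclass ν with h' | h' | ⟨i', h'⟩ | ⟨i', h'⟩ | ⟨j', h'⟩
    · rw [hcv0 μ h, hcv0 ν h', hXc0, etaR_smul_right, g01,
        if_neg (by omega), if_neg (by omega),
        sum_dx_zero bb' μ ν (fun l => ⟨by omega, by omega⟩)]
      simp
    · rw [hcv0 μ h, hcv1 ν h', hXc1, etaR_smul_right, g00,
        if_pos (show (μ:ℕ) = 0 ∧ (ν:ℕ) = 1 from ⟨h, h'⟩),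
        sum_dx_zero bb' μ ν (fun l => ⟨by omega, by omega⟩)]
      simp
    · rw [hcv0 μ h, hcvp ν i' h', hXpp' i', etaR_smul_right, hQc0 i',
        if_neg (by omega), if_neg (by omega),
        sum_dx_zero bb' μ ν (fun l => ⟨by omega, by omega⟩)]
      simp
    · rw [hcv0 μ h, hcvq ν i' h', hXqq' i', etaR_smul_right, hPc0 i',
        if_neg (by omega), if_neg (by omega),
        sum_dx_zero bb' μ ν (fun l => ⟨by omega, by omega⟩)]
      simp
    · rw [hcv0 μ h, hcve ν j' h', hXee j', etaR_zero_right,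
        if_neg (by omega), if_neg (by omega),
        sum_dx_zero bb' μ ν (fun l => ⟨by omega, by omega⟩)]
      simp
    · rw [hcv1 μ h, hcv0 ν h', hXc0, etaR_smul_right, g11,
        if_neg (by omega), if_pos (show (μ:ℕ) = 1 ∧ (ν:ℕ) = 0 from ⟨h, h'⟩),
        sum_dx_zero bb' μ ν (fun l => ⟨by omega, by omega⟩)]
      simp
    · rw [hcv1 μ h, hcv1 ν h', hXc1, etaR_smul_right, etaR_comm, g01,
        if_neg (by omega), if_neg (by omega),
        sum_dx_zero bb' μ ν (fun l => ⟨by omega, by omega⟩)]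
      simp
    · rw [hcv1 μ h, hcvp ν i' h', hXpp' i', etaR_smul_right, hQc1 i',
        if_neg (by omega), if_neg (by omega),
        sum_dx_zero bb' μ ν (fun l => ⟨by omega, by omega⟩)]
      simp
    · rw [hcv1 μ h, hcvq ν i' h', hXqq' i', etaR_smul_right, hPc1 i',
        if_neg (by omega), if_neg (by omega),
        sum_dx_zero bb' μ ν (fun l => ⟨by omega, by omega⟩)]
      simp
    · rw [hcv1 μ h, hcve ν j' h', hXee j', etaR_zero_right,
        if_neg (by omega), if_neg (by omega),
        sum_dx_zero bb' μ ν (fun l => ⟨by omega, by omega⟩)]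
      simp
    · rw [hcvp μ i h, hcv0 ν h', hXc0, etaR_smul_right, etaR_comm, hPc1 i,
        if_neg (by omega), if_neg (by omega),
        sum_dx_zero bb' μ ν (fun l => ⟨by omega, by omega⟩)]
      simp
    · rw [hcvp μ i h, hcv1 ν h', hXc1, etaR_smul_right, etaR_comm, hPc0 i,
        if_neg (by omega), if_neg (by omega),
        sum_dx_zero bb' μ ν (fun l => ⟨by omega, by omega⟩)]
      simp
    · rw [hcvp μ i h, hcvp ν i' h', hXpp' i', etaR_smul_right, hGpq' i i',
        if_neg (by omega), if_neg (by omega),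
        sum_dx_zero bb' μ ν (fun l => ⟨by omega, by omega⟩)]
      simp
    · rw [hcvp μ i h, hcvq ν i' h', hXqq' i', etaR_smul_right, hGpp' i i']
      by_cases hii : i = i'
      · subst hii
        rw [if_pos rfl, if_neg (by omega), if_neg (by omega),
          sum_dx_pq bb' i μ ν h h']
        simp
      · have hvv' : (i:ℕ) ≠ (i':ℕ) := fun hc => hii (Fin.ext hc)
        rw [if_neg hii, if_neg (by omega), if_neg (by omega),
          sum_dx_zero bb' μ ν (fun l => ⟨by omega, by omega⟩)]
        simp
    · rw [hcvp μ i h, hcve ν j' h', hXee j', etaR_zero_right,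
        if_neg (by omega), if_neg (by omega),
        sum_dx_zero bb' μ ν (fun l => ⟨by omega, by omega⟩)]
      simp
    · rw [hcvq μ i h, hcv0 ν h', hXc0, etaR_smul_right, etaR_comm, hQc1 i,
        if_neg (by omega), if_neg (by omega),
        sum_dx_zero bb' μ ν (fun l => ⟨by omega, by omega⟩)]
      simp
    · rw [hcvq μ i h, hcv1 ν h', hXc1, etaR_smul_right, etaR_comm, hQc0 i,
        if_neg (by omega), if_neg (by omega),
        sum_dx_zero bb' μ ν (fun l => ⟨by omega, by omega⟩)]
      simp
    · rw [hcvq μ i h, hcvp ν i' h', hXpp' i', etaR_smul_right, hGqq' i i']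
      by_cases hii : i = i'
      · subst hii
        rw [if_pos rfl, if_neg (by omega), if_neg (by omega),
          sum_dx_qp bb' i μ ν h h']
        simp
      · have hvv' : (i:ℕ) ≠ (i':ℕ) := fun hc => hii (Fin.ext hc)
        rw [if_neg hii, if_neg (by omega), if_neg (by omega),
          sum_dx_zero bb' μ ν (fun l => ⟨by omega, by omega⟩)]
        simp
    · rw [hcvq μ i h, hcvq ν i' h', hXqq' i', etaR_smul_right, etaR_comm, hGpq' i' i,
        if_neg (by omega), if_neg (by omega),
        sum_dx_zero bb' μ ν (fun l => ⟨by omega, by omega⟩)]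
      simp
    · rw [hcvq μ i h, hcve ν j' h', hXee j', etaR_zero_right,
        if_neg (by omega), if_neg (by omega),
        sum_dx_zero bb' μ ν (fun l => ⟨by omega, by omega⟩)]
      simp
    · rw [hcve μ j h, hcv0 ν h', hXc0, etaR_smul_right, hEc1 j,
        if_neg (by omega), if_neg (by omega),
        sum_dx_zero bb' μ ν (fun l => ⟨by omega, by omega⟩)]
      simp
    · rw [hcve μ j h, hcv1 ν h', hXc1, etaR_smul_right, hEc0 j,
        if_neg (by omega), if_neg (by omega),
        sum_dx_zero bb' μ ν (fun l => ⟨by omega, by omega⟩)]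
      simp
    · rw [hcve μ j h, hcvp ν i' h', hXpp' i', etaR_smul_right, hEq j i',
        if_neg (by omega), if_neg (by omega),
        sum_dx_zero bb' μ ν (fun l => ⟨by omega, by omega⟩)]
      simp
    · rw [hcve μ j h, hcvq ν i' h', hXqq' i', etaR_smul_right, hEp j i',
        if_neg (by omega), if_neg (by omega),
        sum_dx_zero bb' μ ν (fun l => ⟨by omega, by omega⟩)]
      simp
    · rw [hcve μ j h, hcve ν j' h', hXee j', etaR_zero_right,
        if_neg (by omega), if_neg (by omega),
        sum_dx_zero bb' μ ν (fun l => ⟨by omega, by omega⟩)]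
      simp
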